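/- Let C be a degree two code and let i, j ∈ [n] with j < i in P(C). Then the neighborhood of j in G(C) is contained in I(i) ∪ N(i), where N(i) is the neighborhood of i in G(C) and I(i) = {ℓ : ℓ < i in P(C)}. -/

import Mathlib

open MvPolynomial

noncomputable section

abbrev PM (n : ℕ) := MvPolynomial (Fin n) (ZMod 2)

/-- A pseudo-monomial in `F₂[x₁,…,xₙ]`. -/
def IsPseudoMonomial {n : ℕ} (f : PM n) : Prop :=
  ∃ σ τ : Finset (Fin n), Disjoint σ τ ∧
    f = (∏ i ∈ σ, X i) * ∏ j ∈ τ, (1 - X j)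

/-- The indicator pseudo-monomial `ρ_σ`. -/
def rho {n : ℕ} (σ : Finset (Fin n)) : PM n :=
  (∏ i ∈ σ, X i) * ∏ j ∈ σᶜ, (1 - X j)

/-- The neural ideal of a code. -/
def neuralIdeal {n : ℕ} (C : Set (Finset (Fin n))) : Ideal (PM n) :=
  Ideal.span {f | ∃ σ ∉ C, f = rho σ}

/-- The canonical form: minimal (under divisibility) pseudo-monomials in the neural ideal. -/
def CF {n : ℕ} (C : Set (Finset (Fin n))) : Set (PM n) :=
  {f | IsPseudoMonomial f ∧ f ∈ neuralIdeal C ∧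
    ∀ g, IsPseudoMonomial g → g ∈ neuralIdeal C → g ∣ f → g = f}

/-- Evaluation of a polynomial at a codeword. -/
def evalAt {n : ℕ} (c : Finset (Fin n)) (f : PM n) : ZMod 2 :=
  MvPolynomial.eval (fun i => if i ∈ c then 1 else 0) f

/-- The standing conventions on codes. -/
def GoodCode {n : ℕ} (C : Set (Finset (Fin n))) : Prop :=
  ∅ ∈ C ∧ (∀ i : Fin n, ∃ c ∈ C, i ∈ c) ∧
    ∀ i j : Fin n, i ≠ j → ¬(∀ c ∈ C, i ∈ c ↔ j ∈ c)

/-- The interval `[σ,τ]`. -/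
def Icc' {n : ℕ} (σ τ : Finset (Fin n)) : Set (Finset (Fin n)) :=
  {γ | σ ⊆ γ ∧ γ ⊆ τ}

/-- The deletion of a neuron from a code (keeping the ambient index set). -/
def del {n : ℕ} (C : Set (Finset (Fin n))) (i : Fin n) : Set (Finset (Fin n)) :=
  (fun c => c.erase i) '' C

/-- The deletion of the last neuron, as a code on `Fin n`. -/
def delLast {n : ℕ} (C : Set (Finset (Fin (n + 1)))) : Set (Finset (Fin n)) :=
  {d | ∃ c ∈ C, d.map Fin.castSuccEmb = c.erase (Fin.last n)}

/-- Neuron `i` is a `k`-piercing of `C`. -/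
def IsPiercing {n : ℕ} (C : Set (Finset (Fin n))) (i : Fin n) (k : ℕ) : Prop :=
  ∃ σ τ : Finset (Fin n), σ ⊆ τ ∧ i ∉ τ ∧ (τ \ σ).card = k ∧
    Icc' σ τ ⊆ del C i ∧
    C = del C i ∪ Icc' (insert i σ) (insert i τ)

/-- `C` is `k`-inductively pierced. -/
inductive InductivelyPierced {n : ℕ} (k : ℕ) : Set (Finset (Fin n)) → Prop
  | empty : InductivelyPierced k {∅}
  | pierce (C : Set (Finset (Fin n))) (i : Fin n) (k' : ℕ) (hk : k' ≤ k)
      (hp : IsPiercing C i k') (hrec : InductivelyPierced k (del C i)) :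
      InductivelyPierced k C

/-- All elements of the canonical form have degree exactly two. -/
def DegreeTwo {n : ℕ} (C : Set (Finset (Fin n))) : Prop :=
  ∀ f ∈ CF C, f.totalDegree = 2

/-- The general relationship graph `G(C)` of a degree two code. -/
def GRel {n : ℕ} (C : Set (Finset (Fin n))) : SimpleGraph (Fin n) where
  Adj i j := i ≠ j ∧ ∀ f ∈ CF C, f.vars ≠ {i, j}
  symm := by
    refine ⟨?_⟩
    rintro i j ⟨hne, h⟩
    exact ⟨hne.symm, fun f hf => by rw [Finset.pair_comm]; exact h f hf⟩
  loopless := ⟨fun i h => h.1 rfl⟩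

/-- The order relation of `P(C)`: `i < j` iff `xᵢ(1-xⱼ) ∈ CF(J_C)`. -/
def PLt {n : ℕ} (C : Set (Finset (Fin n))) (i j : Fin n) : Prop :=
  X i * (1 - X j) ∈ CF C

/-- A simplicial vertex: its neighborhood is a clique. -/
def IsSimplicial {V : Type*} (G : SimpleGraph V) (v : V) : Prop :=
  G.IsClique (G.neighborSet v)

/-- A chordal graph: every cycle of length at least four has a chord. -/
def IsChordal {V : Type*} (G : SimpleGraph V) : Prop :=
  ∀ (u : V) (w : G.Walk u u), w.IsCycle → 4 ≤ w.length →
    ∃ a b, G.Adj a b ∧ a ∈ w.support ∧ b ∈ w.support ∧ s(a, b) ∉ w.edges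

/-- The code of a collection of sets. -/
def codeOf {X : Type*} {n : ℕ} (U : Fin n → Set X) : Set (Finset (Fin n)) :=
  {σ | ∃ p, ∀ i, p ∈ U i ↔ i ∈ σ}

/-- `S` is a `k`-dimensional sphere: a sphere of positive radius inside a
`(k+1)`-dimensional affine subspace, centered in that subspace. -/
def IsSubSphere {E : Type*} [NormedAddCommGroup E] [NormedSpace ℝ E] (k : ℕ)
    (S : Set E) : Prop :=
  ∃ (A : AffineSubspace ℝ E) (c : E) (ρ : ℝ), 0 < ρ ∧ c ∈ A ∧
    Module.finrank ℝ A.direction = k + 1 ∧ S = (A : Set E) ∩ Metric.sphere c ρ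

/-- The boundary spheres of the balls `B(xᵢ, rᵢ)` form a well-formed collection in `ℝ^d`. -/
def WellFormedBalls {d n : ℕ} (x : Fin n → EuclideanSpace ℝ (Fin d))
    (r : Fin n → ℝ) : Prop :=
  ∀ F : Finset (Fin n), F.Nonempty →
    (F.card ≤ d →
      (⋂ i ∈ F, Metric.sphere (x i) (r i)) = ∅ ∨
        IsSubSphere (d - F.card) (⋂ i ∈ F, Metric.sphere (x i) (r i))) ∧
    (F.card = d + 1 → (⋂ i ∈ F, Metric.sphere (x i) (r i)) = ∅)

/-- `C` has a well-formed realization by open balls in `ℝ^d`. -/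
def HasWFRealization {n : ℕ} (C : Set (Finset (Fin n))) (d : ℕ) : Prop :=
  ∃ (x : Fin n → EuclideanSpace ℝ (Fin d)) (r : Fin n → ℝ),
    (∀ i, 0 < r i) ∧ WellFormedBalls x r ∧
    codeOf (fun i => Metric.ball (x i) (r i)) = C


section Aux

variable {n : ℕ}

open Finset in
/-- exponent vector of the squarefree monomial supported on `s` -/
def expOf (s : Finset (Fin n)) : (Fin n) →₀ ℕ := ∑ k ∈ s, Finsupp.single k 1

lemma expOf_apply (s : Finset (Fin n)) (a : Fin n) :
    expOf s a = if a ∈ s then 1 else 0 := by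
  classical
  simp [expOf, Finsupp.finset_sum_apply, Finsupp.single_apply]

lemma expOf_injective : Function.Injective (expOf (n := n)) := by
  intro s t h
  ext a
  have := congrArg (fun f => f a) h
  simp only [expOf_apply] at this
  by_cases hs : a ∈ s <;> by_cases ht : a ∈ t <;> simp_all

lemma expOf_degree (s : Finset (Fin n)) :
    (expOf s).sum (fun _ m => m) = s.card := by
  classical
  induction s using Finset.induction_on with
  | empty => simp [expOf]
  | @insert a s ha ih =>
      rw [show expOf (insert a s) = Finsupp.single a 1 + expOf s by
        simp [expOf, Finset.sum_insert ha]]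
      rw [Finsupp.sum_add_index' (fun _ => rfl) (fun _ _ _ => rfl)]
      rw [ih, Finsupp.sum_single_index rfl, Finset.card_insert_of_notMem ha]
      omega

lemma prod_X_eq (s : Finset (Fin n)) :
    (∏ i ∈ s, (X i : PM n)) = monomial (expOf s) 1 := by
  classical
  induction s using Finset.induction_on with
  | empty => simp [expOf]
  | @insert a s ha ih =>
      rw [Finset.prod_insert ha, ih, X, monomial_mul,
        show expOf (insert a s) = Finsupp.single a 1 + expOf s by
          simp [expOf, Finset.sum_insert ha], one_mul]

lemma one_sub_X (j : Fin n) : (1 : PM n) - X j = X j + 1 := by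
  have : (1 : PM n) - X j = 1 + X j := CharTwo.sub_eq_add 1 (X j)
  rw [this, add_comm]

/-- structure of a pseudo-monomial as a sum of squarefree monomials -/
lemma pm_eq_sum (σ τ : Finset (Fin n)) (hd : Disjoint σ τ) :
    (∏ i ∈ σ, (X i : PM n)) * ∏ j ∈ τ, (1 - X j)
      = ∑ δ ∈ τ.powerset, monomial (expOf (σ ∪ δ)) 1 := by
  classical
  have : (∏ j ∈ τ, ((1:PM n) - X j)) = ∑ δ ∈ τ.powerset, ∏ i ∈ δ, X i := by
    calc (∏ j ∈ τ, ((1:PM n) - X j)) = ∏ j ∈ τ, ((X j : PM n) + 1) := by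
          simp_rw [one_sub_X]
      _ = ∑ δ ∈ τ.powerset, (∏ i ∈ δ, (X i : PM n)) * ∏ i ∈ τ \ δ, 1 :=
          Finset.prod_add _ _ _
      _ = ∑ δ ∈ τ.powerset, ∏ i ∈ δ, X i := by simp
  rw [this, Finset.mul_sum]
  refine Finset.sum_congr rfl (fun δ hδ => ?_)
  rw [← Finset.prod_union (hd.mono_right (Finset.mem_powerset.mp hδ)), prod_X_eq]

lemma pm_coeff_top (σ τ : Finset (Fin n)) (hd : Disjoint σ τ) :
    coeff (expOf (σ ∪ τ)) ((∏ i ∈ σ, (X i : PM n)) * ∏ j ∈ τ, (1 - X j)) = 1 := by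
  classical
  rw [pm_eq_sum σ τ hd]
  rw [coeff_sum]
  rw [Finset.sum_eq_single_of_mem τ (Finset.mem_powerset_self τ)]
  · simp [coeff_monomial]
  · intro δ hδ hne
    rw [coeff_monomial, if_neg]
    intro h
    apply hne
    have := expOf_injective h
    have hsub : δ ⊆ τ := Finset.mem_powerset.mp hδ
    apply Finset.Subset.antisymm hsub
    intro x hx
    have hxu : x ∈ σ ∪ δ := by rw [this]; exact Finset.mem_union_right _ hx
    rcases Finset.mem_union.mp hxu with h1 | h1
    · exact absurd hx (Finset.disjoint_left.mp hd h1)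
    · exact h1

lemma pm_ne_zero (σ τ : Finset (Fin n)) (hd : Disjoint σ τ) :
    (∏ i ∈ σ, (X i : PM n)) * ∏ j ∈ τ, (1 - X j) ≠ 0 := by
  intro h
  have := pm_coeff_top σ τ hd
  rw [h] at this
  simp at this

lemma pm_vars (σ τ : Finset (Fin n)) (hd : Disjoint σ τ) :
    ((∏ i ∈ σ, (X i : PM n)) * ∏ j ∈ τ, (1 - X j)).vars = σ ∪ τ := by
  classical
  apply Finset.Subset.antisymm
  · refine (vars_mul _ _).trans ?_
    apply Finset.union_subset
    · refine (vars_prod _).trans ?_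
      intro v hv
      simp only [Finset.mem_biUnion] at hv
      obtain ⟨a, ha, hva⟩ := hv
      rw [vars_X, Finset.mem_singleton] at hva
      subst hva
      exact Finset.mem_union_left _ ha
    · refine (vars_prod _).trans ?_
      intro v hv
      simp only [Finset.mem_biUnion] at hv
      obtain ⟨a, ha, hva⟩ := hv
      rw [one_sub_X] at hva
      have : v ∈ (X a : PM n).vars ∪ (1 : PM n).vars := vars_add_subset _ _ hva
      rw [vars_X, vars_one] at this
      simp only [Finset.union_empty, Finset.mem_singleton] at this
      subst this
      exact Finset.mem_union_right _ ha
  · intro v hv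
    rw [mem_vars]
    refine ⟨expOf (σ ∪ τ), ?_, ?_⟩
    · rw [MvPolynomial.mem_support_iff, pm_coeff_top σ τ hd]
      exact one_ne_zero
    · rw [Finsupp.mem_support_iff, expOf_apply, if_pos hv]
      exact one_ne_zero

lemma pm_totalDegree (σ τ : Finset (Fin n)) (hd : Disjoint σ τ) :
    ((∏ i ∈ σ, (X i : PM n)) * ∏ j ∈ τ, (1 - X j)).totalDegree = σ.card + τ.card := by
  classical
  apply le_antisymm
  · refine (totalDegree_mul _ _).trans ?_
    gcongr
    · refine (totalDegree_finset_prod _ _).trans ?_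
      simp [totalDegree_X]
    · refine (totalDegree_finset_prod _ _).trans ?_
      calc (∑ j ∈ τ, ((1:PM n) - X j).totalDegree) ≤ ∑ j ∈ τ, 1 := by
            refine Finset.sum_le_sum (fun j _ => ?_)
            rw [one_sub_X]
            refine (totalDegree_add _ _).trans ?_
            simp [totalDegree_X]
        _ = τ.card := by simp
  · have hmem : expOf (σ ∪ τ) ∈
        ((∏ i ∈ σ, (X i : PM n)) * ∏ j ∈ τ, (1 - X j)).support := by
      rw [MvPolynomial.mem_support_iff, pm_coeff_top σ τ hd]
      exact one_ne_zero
    have := le_totalDegree hmem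
    rwa [expOf_degree, Finset.card_union_of_disjoint hd] at this

end Aux

section Aux2

variable {n : ℕ}

lemma finsuppDegree_add (u v : Fin n →₀ ℕ) :
    ((u + v).sum fun _ m => m) = (u.sum fun _ m => m) + (v.sum fun _ m => m) :=
  Finsupp.sum_add_index' (fun _ => rfl) (fun _ _ _ => rfl)

lemma totalDegree_mul_eq {p q : PM n} (hp : p ≠ 0) (hq : q ≠ 0) :
    (p * q).totalDegree = p.totalDegree + q.totalDegree := by
  classical
  apply le_antisymm (totalDegree_mul p q)
  have hps : p.support.Nonempty := Finset.nonempty_iff_ne_empty.mpr (fun h0 => hp (MvPolynomial.support_eq_empty.mp h0))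
  have hqs : q.support.Nonempty := Finset.nonempty_iff_ne_empty.mpr (fun h0 => hq (MvPolynomial.support_eq_empty.mp h0))
  obtain ⟨a, haS, ha⟩ : ∃ a ∈ p.support, p.totalDegree = a.sum fun _ m => m :=
    Finset.exists_mem_eq_sup _ hps _
  obtain ⟨b, hbS, hb⟩ : ∃ b ∈ q.support, q.totalDegree = b.sum fun _ m => m :=
    Finset.exists_mem_eq_sup _ hqs _
  set Tp := p.support.filter (fun s => (s.sum fun _ m => m) = p.totalDegree) with hTp
  set Tq := q.support.filter (fun s => (s.sum fun _ m => m) = q.totalDegree) with hTq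
  obtain ⟨A, hA, hAmax⟩ := Tp.exists_max_image (fun s => toLex s)
    ⟨a, Finset.mem_filter.mpr ⟨haS, ha.symm⟩⟩
  obtain ⟨B, hB, hBmax⟩ := Tq.exists_max_image (fun s => toLex s)
    ⟨b, Finset.mem_filter.mpr ⟨hbS, hb.symm⟩⟩
  obtain ⟨hA1, hA2⟩ := Finset.mem_filter.mp hA
  obtain ⟨hB1, hB2⟩ := Finset.mem_filter.mp hB
  have key : coeff (A + B) (p * q) = coeff A p * coeff B q := by
    rw [coeff_mul]
    apply Finset.sum_eq_single_of_mem (A, B) (Finset.HasAntidiagonal.mem_antidiagonal.mpr rfl)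
    intro xy hxy hne
    by_contra hC
    have hx : xy.1 ∈ p.support := MvPolynomial.mem_support_iff.mpr (left_ne_zero_of_mul hC)
    have hy : xy.2 ∈ q.support := MvPolynomial.mem_support_iff.mpr (right_ne_zero_of_mul hC)
    have hsum : xy.1 + xy.2 = A + B := Finset.HasAntidiagonal.mem_antidiagonal.mp hxy
    have d1 : (xy.1.sum fun _ m => m) ≤ p.totalDegree := le_totalDegree hx
    have d2 : (xy.2.sum fun _ m => m) ≤ q.totalDegree := le_totalDegree hy
    have dsum : (xy.1.sum fun _ m => m) + (xy.2.sum fun _ m => m)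
        = p.totalDegree + q.totalDegree := by
      rw [← finsuppDegree_add, hsum, finsuppDegree_add, hA2, hB2]
    have e1 : xy.1 ∈ Tp := Finset.mem_filter.mpr ⟨hx, by omega⟩
    have e2 : xy.2 ∈ Tq := Finset.mem_filter.mpr ⟨hy, by omega⟩
    have lex1 : toLex xy.1 ≤ toLex A := hAmax _ e1
    have lex2 : toLex xy.2 ≤ toLex B := hBmax _ e2
    have hxA : xy.1 = A := by
      by_contra hne1
      have hlt : toLex xy.1 < toLex A :=
        lt_of_le_of_ne lex1 (fun h => hne1 (congrArg ofLex h))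
      have : toLex (xy.1 + xy.2) < toLex (A + B) := by
        have := add_lt_add_of_lt_of_le hlt lex2
        exact this
      rw [hsum] at this
      exact lt_irrefl _ this
    have hyB : xy.2 = B := by
      have := hsum
      rw [hxA] at this
      exact add_left_cancel this
    exact hne (Prod.ext hxA hyB)
  have hne : coeff (A + B) (p * q) ≠ 0 := by
    rw [key]
    exact mul_ne_zero (MvPolynomial.mem_support_iff.mp hA1)
      (MvPolynomial.mem_support_iff.mp hB1)
  have := le_totalDegree (MvPolynomial.mem_support_iff.mpr hne)
  rwa [finsuppDegree_add, hA2, hB2] at this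

lemma eq_of_dvd_of_totalDegree_le {g f : PM n} (hf : f ≠ 0) (hd : g ∣ f)
    (hdeg : f.totalDegree ≤ g.totalDegree) : g = f := by
  obtain ⟨q, rfl⟩ := hd
  have hg : g ≠ 0 := left_ne_zero_of_mul hf
  have hq : q ≠ 0 := right_ne_zero_of_mul hf
  rw [totalDegree_mul_eq hg hq] at hdeg
  have hq0 : q.totalDegree = 0 := by omega
  have hsupp : ∀ m ∈ q.support, ∀ x, m x = 0 :=
    (MvPolynomial.totalDegree_eq_zero_iff _ q).mp hq0
  have hqC : q = C (coeff 0 q) := by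
    ext m
    rw [coeff_C]
    by_cases hm : m = 0
    · subst hm; simp
    · rw [if_neg (Ne.symm hm)]
      by_contra hc
      exact hm (Finsupp.ext fun x => hsupp m (MvPolynomial.mem_support_iff.mpr hc) x)
  have ha : coeff 0 q ≠ 0 := fun h => hq (by rw [hqC, h, map_zero])
  have ha1 : coeff 0 q = 1 := by
    have : ∀ a : ZMod 2, a ≠ 0 → a = 1 := by decide
    exact this _ ha
  rw [hqC, ha1, map_one, mul_one]

lemma exists_cf_dvd (C : Set (Finset (Fin n))) :
    ∀ d (f : PM n), f.totalDegree ≤ d → IsPseudoMonomial f → f ∈ neuralIdeal C →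
      ∃ g ∈ CF C, g ∣ f := by
  intro d
  induction d with
  | zero =>
      intro f hdf hpm hmem
      by_cases hmin : ∀ g, IsPseudoMonomial g → g ∈ neuralIdeal C → g ∣ f → g = f
      · exact ⟨f, ⟨hpm, hmem, hmin⟩, dvd_rfl⟩
      · push_neg at hmin
        obtain ⟨g, hgpm, hgmem, hgdvd, hgne⟩ := hmin
        have hfne : f ≠ 0 := by
          obtain ⟨σ, τ, hdj, hfe⟩ := hpm
          rw [hfe]; exact pm_ne_zero _ _ hdj
        have hlt : g.totalDegree < f.totalDegree := by
          by_contra hge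
          push_neg at hge
          exact hgne (eq_of_dvd_of_totalDegree_le hfne hgdvd hge)
        omega
  | succ d ih =>
      intro f hdf hpm hmem
      by_cases hmin : ∀ g, IsPseudoMonomial g → g ∈ neuralIdeal C → g ∣ f → g = f
      · exact ⟨f, ⟨hpm, hmem, hmin⟩, dvd_rfl⟩
      · push_neg at hmin
        obtain ⟨g, hgpm, hgmem, hgdvd, hgne⟩ := hmin
        have hfne : f ≠ 0 := by
          obtain ⟨σ, τ, hdj, hfe⟩ := hpm
          rw [hfe]; exact pm_ne_zero _ _ hdj
        have hlt : g.totalDegree < f.totalDegree := by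
          by_contra hge
          push_neg at hge
          exact hgne (eq_of_dvd_of_totalDegree_le hfne hgdvd hge)
        obtain ⟨h, hh, hhd⟩ := ih g (by omega) hgpm hgmem
        exact ⟨h, hh, hhd.trans hgdvd⟩

end Aux2

section Aux3

variable {n : ℕ}

lemma evalAt_pm_one (c σ τ : Finset (Fin n)) (hσ : σ ⊆ c) (hτ : Disjoint τ c) :
    evalAt c ((∏ i ∈ σ, (X i : PM n)) * ∏ j ∈ τ, (1 - X j)) = 1 := by
  rw [evalAt, map_mul, map_prod, map_prod]
  rw [Finset.prod_eq_one (fun i hi => by simp [hσ hi]),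
    Finset.prod_eq_one (fun j hj => by simp [Finset.disjoint_left.mp hτ hj]), one_mul]

lemma evalAt_rho_ne (c σ : Finset (Fin n)) (hne : c ≠ σ) : evalAt c (rho σ) = 0 := by
  classical
  rw [rho, evalAt, map_mul, map_prod, map_prod]
  by_cases hσc : σ ⊆ c
  · have hcσ : ¬ c ⊆ σ := fun h => hne (Finset.Subset.antisymm h hσc)
    obtain ⟨x, hxc, hxσ⟩ := Finset.not_subset.mp hcσ
    apply mul_eq_zero_of_right
    apply Finset.prod_eq_zero (Finset.mem_compl.mpr hxσ)
    simp [hxc]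
  · obtain ⟨x, hxσ, hxc⟩ := Finset.not_subset.mp hσc
    apply mul_eq_zero_of_left
    apply Finset.prod_eq_zero hxσ
    simp [hxc]

lemma eval_zero_of_mem_ideal {C : Set (Finset (Fin n))} {f : PM n}
    (hf : f ∈ neuralIdeal C) {c : Finset (Fin n)} (hc : c ∈ C) : evalAt c f = 0 := by
  have hle : neuralIdeal C ≤
      RingHom.ker (eval (fun i => if i ∈ c then (1 : ZMod 2) else 0)) := by
    rw [neuralIdeal, Ideal.span_le]
    rintro g ⟨σ, hσ, rfl⟩
    have hne : c ≠ σ := fun h => hσ (h ▸ hc)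
    exact RingHom.mem_ker.mpr (evalAt_rho_ne c σ hne)
  exact RingHom.mem_ker.mp (hle hf)

lemma pm_mem_of_vanishing {C : Set (Finset (Fin n))} (σ τ : Finset (Fin n))
    (hd : Disjoint σ τ)
    (hv : ∀ c ∈ C, evalAt c ((∏ i ∈ σ, (X i : PM n)) * ∏ j ∈ τ, (1 - X j)) = 0) :
    (∏ i ∈ σ, (X i : PM n)) * ∏ j ∈ τ, (1 - X j) ∈ neuralIdeal C := by
  classical
  set R := (σ ∪ τ)ᶜ with hR
  have h1 : (1 : PM n) = ∑ δ ∈ R.powerset, (∏ k ∈ δ, X k) * ∏ k ∈ R \ δ, (1 - X k) := by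
    calc (1 : PM n) = ∏ k ∈ R, 1 := (Finset.prod_const_one).symm
      _ = ∏ k ∈ R, ((X k : PM n) + (1 - X k)) :=
          Finset.prod_congr rfl (fun k _ => by ring)
      _ = _ := Finset.prod_add _ _ _
  have key : (∏ i ∈ σ, (X i : PM n)) * ∏ j ∈ τ, (1 - X j)
      = ∑ δ ∈ R.powerset, rho (σ ∪ δ) := by
    have h2 : (∏ i ∈ σ, (X i : PM n)) * ∏ j ∈ τ, (1 - X j)
        = ((∏ i ∈ σ, (X i : PM n)) * ∏ j ∈ τ, (1 - X j))
          * ∑ δ ∈ R.powerset, (∏ k ∈ δ, X k) * ∏ k ∈ R \ δ, (1 - X k) := by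
      rw [← h1, mul_one]
    rw [h2, Finset.mul_sum]
    refine Finset.sum_congr rfl (fun δ hδ => ?_)
    have hδR : δ ⊆ R := Finset.mem_powerset.mp hδ
    have hδστ : ∀ x ∈ δ, x ∉ σ ∧ x ∉ τ := by
      intro x hx
      have := hδR hx
      rw [hR, Finset.mem_compl, Finset.mem_union] at this
      tauto
    have hσδ : Disjoint σ δ :=
      Finset.disjoint_right.mpr (fun x hx => (hδστ x hx).1)
    have hτRδ : Disjoint τ (R \ δ) := by
      refine Finset.disjoint_left.mpr (fun x hx hx' => ?_)
      have := (Finset.mem_sdiff.mp hx').1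
      rw [hR, Finset.mem_compl, Finset.mem_union] at this
      tauto
    have hset : τ ∪ (R \ δ) = (σ ∪ δ)ᶜ := by
      ext x
      have h1 : x ∈ τ → x ∉ σ := fun h => Finset.disjoint_right.mp hd h
      have h2 : x ∈ δ → x ∉ σ ∧ x ∉ τ := hδστ x
      simp only [hR, Finset.mem_union, Finset.mem_sdiff, Finset.mem_compl]
      tauto
    simp only [rho]
    rw [Finset.prod_union hσδ, ← hset, Finset.prod_union hτRδ]
    ring
  rw [key]
  apply Ideal.sum_mem
  intro δ hδ
  have hδR : δ ⊆ R := Finset.mem_powerset.mp hδ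
  apply Ideal.subset_span
  refine ⟨σ ∪ δ, ?_, rfl⟩
  intro hmem
  have hστ : σ ⊆ σ ∪ δ := Finset.subset_union_left
  have hτd : Disjoint τ (σ ∪ δ) := by
    refine Finset.disjoint_left.mpr (fun x hx hx' => ?_)
    rcases Finset.mem_union.mp hx' with h' | h'
    · exact Finset.disjoint_right.mp hd hx h'
    · have := hδR h'
      rw [hR, Finset.mem_compl, Finset.mem_union] at this
      tauto
  have := hv _ hmem
  rw [evalAt_pm_one _ _ _ hστ hτd] at this
  exact one_ne_zero this

end Aux3

section Aux4

variable {n : ℕ}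

lemma disj_singletons {a b : Fin n} (hab : a ≠ b) :
    Disjoint ({a} : Finset (Fin n)) {b} := by
  simp only [Finset.disjoint_singleton_left, Finset.mem_singleton]
  exact fun hh => hab hh

lemma form_XX (a b : Fin n) (hab : a ≠ b) :
    (∏ k ∈ ({a, b} : Finset (Fin n)), (X k : PM n)) * ∏ k ∈ (∅ : Finset (Fin n)), (1 - X k)
      = X a * X b := by
  simp [Finset.prod_pair hab]

lemma form_Xs (a b : Fin n) :
    (∏ k ∈ ({a} : Finset (Fin n)), (X k : PM n)) * ∏ k ∈ ({b} : Finset (Fin n)), (1 - X k)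
      = X a * (1 - X b) := by
  simp

lemma form_ss (a b : Fin n) (hab : a ≠ b) :
    (∏ k ∈ (∅ : Finset (Fin n)), (X k : PM n)) * ∏ k ∈ ({a, b} : Finset (Fin n)), (1 - X k)
      = (1 - X a) * (1 - X b) := by
  simp [Finset.prod_pair hab]

lemma vars_XX (a b : Fin n) (hab : a ≠ b) : (X a * X b : PM n).vars = {a, b} := by
  rw [← form_XX a b hab, pm_vars _ _ (Finset.disjoint_empty_right _)]
  simp

lemma vars_Xs (a b : Fin n) (hab : a ≠ b) : (X a * (1 - X b) : PM n).vars = {a, b} := by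
  rw [← form_Xs a b, pm_vars _ _ (disj_singletons hab)]
  rfl

lemma deg_XX (a b : Fin n) (hab : a ≠ b) : (X a * X b : PM n).totalDegree = 2 := by
  rw [← form_XX a b hab, pm_totalDegree _ _ (Finset.disjoint_empty_right _)]
  simp [Finset.card_pair hab]

lemma deg_Xs (a b : Fin n) (hab : a ≠ b) : (X a * (1 - X b) : PM n).totalDegree = 2 := by
  rw [← form_Xs a b, pm_totalDegree _ _ (disj_singletons hab)]
  simp

lemma nz_XX (a b : Fin n) (hab : a ≠ b) : (X a * X b : PM n) ≠ 0 := by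
  rw [← form_XX a b hab]
  exact pm_ne_zero _ _ (Finset.disjoint_empty_right _)

lemma nz_Xs (a b : Fin n) (hab : a ≠ b) : (X a * (1 - X b) : PM n) ≠ 0 := by
  rw [← form_Xs a b]
  exact pm_ne_zero _ _ (disj_singletons hab)

lemma evalAt_X_mul_one_sub (c : Finset (Fin n)) (a b : Fin n) :
    evalAt c (X a * (1 - X b)) = if a ∈ c ∧ b ∉ c then 1 else 0 := by
  simp only [evalAt, map_mul, map_sub, map_one, eval_X]
  by_cases ha : a ∈ c <;> by_cases hb : b ∈ c <;> simp [ha, hb]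

lemma evalAt_X_mul_X (c : Finset (Fin n)) (a b : Fin n) :
    evalAt c (X a * X b) = if a ∈ c ∧ b ∈ c then 1 else 0 := by
  simp only [evalAt, map_mul, eval_X]
  by_cases ha : a ∈ c <;> by_cases hb : b ∈ c <;> simp [ha, hb]

lemma evalAt_one_sub_mul_one_sub (c : Finset (Fin n)) (a b : Fin n) :
    evalAt c ((1 - X a) * (1 - X b)) = if a ∉ c ∧ b ∉ c then 1 else 0 := by
  simp only [evalAt, map_mul, map_sub, map_one, eval_X]
  by_cases ha : a ∈ c <;> by_cases hb : b ∈ c <;> simp [ha, hb]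

lemma ite_zero {P : Prop} [Decidable P] (h : (if P then (1 : ZMod 2) else 0) = 0) : ¬P :=
  fun hP => one_ne_zero (by rwa [if_pos hP] at h)

lemma plt_ne {C : Set (Finset (Fin n))} {a b : Fin n} (h : PLt C a b) : a ≠ b := by
  rintro rfl
  obtain ⟨⟨σ, τ, hdj, heq⟩, -, -⟩ := h
  have hc := congrArg (coeff (Finsupp.single a 2)) heq
  have hXX : (X a * X a : PM n) = monomial (Finsupp.single a 2) 1 := by
    rw [X, monomial_mul, one_mul]
    congr 1
    rw [← Finsupp.single_add]
  have hL : coeff (Finsupp.single a 2) (X a * (1 - X a) : PM n) = 1 := by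
    have hrw : (X a * (1 - X a) : PM n) = X a - monomial (Finsupp.single a 2) 1 := by
      rw [← hXX]; ring
    rw [hrw, coeff_sub, coeff_X', coeff_monomial, if_pos rfl, if_neg]
    · decide
    · intro hh
      have := DFunLike.congr_fun hh a
      simp at this
  have hR : coeff (Finsupp.single a 2)
      ((∏ i ∈ σ, (X i : PM n)) * ∏ j ∈ τ, (1 - X j)) = 0 := by
    rw [pm_eq_sum σ τ hdj, coeff_sum]
    apply Finset.sum_eq_zero
    intro δ hδ
    rw [coeff_monomial, if_neg]
    intro hh
    have := DFunLike.congr_fun hh a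
    rw [expOf_apply] at this
    simp only [Finsupp.single_eq_same] at this
    split at this <;> omega
  rw [hL, hR] at hc
  exact one_ne_zero hc

end Aux4

/-- if `j < i` in `P(C)`, then `N(j) ⊆ I(i) ∪ N(i)`. -/
theorem neighborhood_subset {n : ℕ} (C : Set (Finset (Fin n)))
    (hgood : GoodCode C) (hdeg : DegreeTwo C) (i j : Fin n) (h : PLt C j i) :
    (GRel C).neighborSet j ⊆ {ℓ | PLt C ℓ i} ∪ (GRel C).neighborSet i := by
  classical
  intro ℓ hℓ
  have hadjjl : (GRel C).Adj j ℓ := ((GRel C).mem_neighborSet j ℓ).mp hℓ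
  obtain ⟨hjl, hvarsjl⟩ := hadjjl
  have hji : j ≠ i := plt_ne h
  have hf0CF : (X j * (1 - X i) : PM n) ∈ CF C := h
  have hf0mem : (X j * (1 - X i) : PM n) ∈ neuralIdeal C := hf0CF.2.1
  by_cases hli : ℓ = i
  · subst hli
    exact absurd (vars_Xs j ℓ hji) (hvarsjl _ hf0CF)
  by_cases hadj : ∀ f ∈ CF C, f.vars ≠ {i, ℓ}
  · exact Set.mem_union_right _
      (((GRel C).mem_neighborSet i ℓ).mpr ⟨fun he => hli he.symm, hadj⟩)
  push_neg at hadj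
  obtain ⟨f, hfCF, hfvars⟩ := hadj
  have hfdeg : f.totalDegree = 2 := hdeg f hfCF
  have hfmem : f ∈ neuralIdeal C := hfCF.2.1
  obtain ⟨σ, τ, hdj, hfeq⟩ := hfCF.1
  have hil : i ≠ ℓ := fun he => hli he.symm
  have hvars : σ ∪ τ = {i, ℓ} := by
    rw [hfeq, pm_vars σ τ hdj] at hfvars
    exact hfvars
  have hcard : σ.card + τ.card = 2 := by
    rw [hfeq, pm_totalDegree σ τ hdj] at hfdeg
    exact hfdeg
  have hiu : i ∈ σ ∪ τ := by rw [hvars]; exact Finset.mem_insert_self _ _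
  have hlu : ℓ ∈ σ ∪ τ := by
    rw [hvars]; exact Finset.mem_insert_of_mem (Finset.mem_singleton_self _)
  rcases Finset.mem_union.mp hiu with hiσ | hiτ <;>
    rcases Finset.mem_union.mp hlu with hlσ | hlτ
  · -- f = X i * X ℓ
    have hτ : τ = ∅ := by
      rw [Finset.eq_empty_iff_forall_notMem]
      intro x hx
      have hx' : x ∈ ({i, ℓ} : Finset (Fin n)) := hvars ▸ Finset.mem_union_right _ hx
      rcases Finset.mem_insert.mp hx' with rfl | hx''
      · exact Finset.disjoint_left.mp hdj hiσ hx
      · rw [Finset.mem_singleton] at hx''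
        subst hx''
        exact Finset.disjoint_left.mp hdj hlσ hx
    have hσ : σ = {i, ℓ} := by
      rw [hτ, Finset.union_empty] at hvars
      exact hvars
    have hfmem' : (X i * X ℓ : PM n) ∈ neuralIdeal C := by
      rw [← form_XX i ℓ hil, ← hσ, ← hτ, ← hfeq]
      exact hfmem
    have hvan : ∀ c ∈ C, evalAt c (X j * X ℓ : PM n) = 0 := by
      intro c hc
      rw [evalAt_X_mul_X]
      rw [if_neg]
      rintro ⟨hjc, hlc⟩
      have h1 := eval_zero_of_mem_ideal hf0mem hc
      rw [evalAt_X_mul_one_sub] at h1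
      have hic : i ∈ c := by
        by_contra hic
        exact ite_zero h1 ⟨hjc, hic⟩
      have h2 := eval_zero_of_mem_ideal hfmem' hc
      rw [evalAt_X_mul_X] at h2
      exact ite_zero h2 ⟨hic, hlc⟩
    have hpmem : (X j * X ℓ : PM n) ∈ neuralIdeal C := by
      rw [← form_XX j ℓ hjl]
      apply pm_mem_of_vanishing _ _ (Finset.disjoint_empty_right _)
      intro c hc
      rw [form_XX j ℓ hjl]
      exact hvan c hc
    obtain ⟨g, hgCF, hgdvd⟩ := exists_cf_dvd C 2 (X j * X ℓ) (le_of_eq (deg_XX j ℓ hjl))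
      ⟨{j, ℓ}, ∅, Finset.disjoint_empty_right _, (form_XX j ℓ hjl).symm⟩ hpmem
    have hg2 : g.totalDegree = 2 := hdeg g hgCF
    have hgeq : g = X j * X ℓ :=
      eq_of_dvd_of_totalDegree_le (nz_XX j ℓ hjl) hgdvd (by rw [hg2, deg_XX j ℓ hjl])
    exact absurd (by rw [hgeq, vars_XX j ℓ hjl]) (hvarsjl g hgCF)
  · -- f = X i * (1 - X ℓ)
    have hσ : σ = {i} := by
      apply Finset.Subset.antisymm
      · intro x hx
        have hx' : x ∈ ({i, ℓ} : Finset (Fin n)) := hvars ▸ Finset.mem_union_left _ hx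
        rcases Finset.mem_insert.mp hx' with rfl | hx''
        · exact Finset.mem_singleton_self _
        · rw [Finset.mem_singleton] at hx''
          subst hx''
          exact absurd hx (Finset.disjoint_right.mp hdj hlτ)
      · simp [hiσ]
    have hτ : τ = {ℓ} := by
      apply Finset.Subset.antisymm
      · intro x hx
        have hx' : x ∈ ({i, ℓ} : Finset (Fin n)) := hvars ▸ Finset.mem_union_right _ hx
        rcases Finset.mem_insert.mp hx' with rfl | hx''
        · exact absurd hx (Finset.disjoint_left.mp hdj hiσ)
        · exact hx''
      · simp [hlτ]
    have hfmem' : (X i * (1 - X ℓ) : PM n) ∈ neuralIdeal C := by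
      rw [← form_Xs i ℓ, ← hσ, ← hτ, ← hfeq]
      exact hfmem
    have hvan : ∀ c ∈ C, evalAt c (X j * (1 - X ℓ) : PM n) = 0 := by
      intro c hc
      rw [evalAt_X_mul_one_sub]
      rw [if_neg]
      rintro ⟨hjc, hlc⟩
      have h1 := eval_zero_of_mem_ideal hf0mem hc
      rw [evalAt_X_mul_one_sub] at h1
      have hic : i ∈ c := by
        by_contra hic
        exact ite_zero h1 ⟨hjc, hic⟩
      have h2 := eval_zero_of_mem_ideal hfmem' hc
      rw [evalAt_X_mul_one_sub] at h2
      exact ite_zero h2 ⟨hic, hlc⟩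
    have hpmem : (X j * (1 - X ℓ) : PM n) ∈ neuralIdeal C := by
      rw [← form_Xs j ℓ]
      apply pm_mem_of_vanishing _ _ (disj_singletons hjl)
      intro c hc
      rw [form_Xs j ℓ]
      exact hvan c hc
    obtain ⟨g, hgCF, hgdvd⟩ := exists_cf_dvd C 2 (X j * (1 - X ℓ)) (le_of_eq (deg_Xs j ℓ hjl))
      ⟨{j}, {ℓ}, disj_singletons hjl, (form_Xs j ℓ).symm⟩ hpmem
    have hg2 : g.totalDegree = 2 := hdeg g hgCF
    have hgeq : g = X j * (1 - X ℓ) :=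
      eq_of_dvd_of_totalDegree_le (nz_Xs j ℓ hjl) hgdvd (by rw [hg2, deg_Xs j ℓ hjl])
    exact absurd (by rw [hgeq, vars_Xs j ℓ hjl]) (hvarsjl g hgCF)
  · -- f = X ℓ * (1 - X i)  : PLt C ℓ i
    have hσ : σ = {ℓ} := by
      apply Finset.Subset.antisymm
      · intro x hx
        have hx' : x ∈ ({i, ℓ} : Finset (Fin n)) := hvars ▸ Finset.mem_union_left _ hx
        rcases Finset.mem_insert.mp hx' with rfl | hx''
        · exact absurd hx (Finset.disjoint_right.mp hdj hiτ)
        · exact hx''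
      · simp [hlσ]
    have hτ : τ = {i} := by
      apply Finset.Subset.antisymm
      · intro x hx
        have hx' : x ∈ ({i, ℓ} : Finset (Fin n)) := hvars ▸ Finset.mem_union_right _ hx
        rcases Finset.mem_insert.mp hx' with rfl | hx''
        · exact Finset.mem_singleton_self _
        · rw [Finset.mem_singleton] at hx''
          subst hx''
          exact absurd hx (Finset.disjoint_left.mp hdj hlσ)
      · simp [hiτ]
    apply Set.mem_union_left
    show PLt C ℓ i
    show (X ℓ * (1 - X i) : PM n) ∈ CF C
    rw [← form_Xs ℓ i, ← hσ, ← hτ, ← hfeq]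
    exact hfCF
  · -- f = (1 - X i) * (1 - X ℓ) : contradiction with ∅ ∈ C
    have hσ : σ = ∅ := by
      rw [Finset.eq_empty_iff_forall_notMem]
      intro x hx
      have hx' : x ∈ ({i, ℓ} : Finset (Fin n)) := hvars ▸ Finset.mem_union_left _ hx
      rcases Finset.mem_insert.mp hx' with rfl | hx''
      · exact Finset.disjoint_left.mp hdj hx hiτ
      · rw [Finset.mem_singleton] at hx''
        subst hx''
        exact Finset.disjoint_left.mp hdj hx hlτ
    have hτ : τ = {i, ℓ} := by
      rw [hσ, Finset.empty_union] at hvars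
      exact hvars
    have hfmem' : ((1 - X i) * (1 - X ℓ) : PM n) ∈ neuralIdeal C := by
      rw [← form_ss i ℓ hil, ← hσ, ← hτ, ← hfeq]
      exact hfmem
    have h0 := eval_zero_of_mem_ideal hfmem' hgood.1
    rw [evalAt_one_sub_mul_one_sub] at h0
    exact absurd ⟨Finset.notMem_empty i, Finset.notMem_empty ℓ⟩ (ite_zero h0)


end
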